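/- arXiv:1807.08112 — 4 statements merged into one kernel-verified Lean document; each statement's English description precedes it below -/
import Mathlib

section
/- Let G be a k-uniform hypergraph with n vertices and m edges, let 0 ≤ α < 1, and let x be a nonnegative real vector indexed by the vertices with maximum entry x̄. Suppose ρ is a real number such that for every vertex i, (ρ - α d_i) x_i^{k-1} = (1-α) Σ_{e ∋ i} Π_{v ∈ e, v ≠ i} x_v, where d_i is the degree of i. If Δ is the maximum degree and x is not identically zero, then ρ ≤ αΔ + (1-α) k m x̄^k / (Σ_i x_i^k) whenever Σ_i x_i^k > 0. -/
/-- The degree of a vertex `v` in a hypergraph with edge set `E`. -/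
def hdeg {V : Type*} [DecidableEq V] (E : Finset (Finset V)) (v : V) : ℕ :=
  (E.filter (fun e => v ∈ e)).card

/-- if a nonnegative vector x with maximum entry x̄ satisfies the
α-eigenequation with value ρ, Δ is the maximum degree, and Σ x_i^k > 0, then
ρ ≤ αΔ + (1-α)·k·m·x̄^k / (Σ x_i^k). -/
theorem stmt6 {V : Type*} [Fintype V] [DecidableEq V] (k : ℕ) (hk : 2 ≤ k)
    (E : Finset (Finset V)) (hunif : ∀ e ∈ E, e.card = k)
    (α : ℝ) (hα0 : 0 ≤ α) (hα1 : α < 1)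
    (x : V → ℝ) (hx : ∀ v, 0 ≤ x v)
    (xbar : ℝ) (hub : ∀ v, x v ≤ xbar) (hmax : ∃ v, x v = xbar)
    (ρ Δ : ℝ) (hΔub : ∀ v, (hdeg E v : ℝ) ≤ Δ) (hΔmax : ∃ v, (hdeg E v : ℝ) = Δ)
    (heig : ∀ i : V, (ρ - α * hdeg E i) * x i ^ (k - 1) =
      (1 - α) * ∑ e ∈ E.filter (fun e => i ∈ e), ∏ v ∈ e.erase i, x v)
    (hx0 : ∃ v, x v ≠ 0)
    (hsum : 0 < ∑ v : V, x v ^ k) :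
    ρ ≤ α * Δ + (1 - α) * k * E.card * xbar ^ k / (∑ v : V, x v ^ k) := by
  obtain ⟨v0, _⟩ := hx0
  have hxbar : (0:ℝ) ≤ xbar := (hx v0).trans (hub v0)
  have h1α : (0:ℝ) ≤ 1 - α := by linarith
  set S := ∑ v : V, x v ^ k with hS
  -- pointwise bound
  have key : ∀ i : V, (ρ - α * (hdeg E i : ℝ)) * x i ^ k ≤
      (1 - α) * (hdeg E i : ℝ) * xbar ^ k := by
    intro i
    have h := heig i
    have hk1 : x i ^ k = x i ^ (k - 1) * x i := by
      rw [← pow_succ]; congr 1; omega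
    calc (ρ - α * (hdeg E i : ℝ)) * x i ^ k
        = ((ρ - α * (hdeg E i : ℝ)) * x i ^ (k - 1)) * x i := by rw [hk1]; ring
      _ = (1 - α) * ((∑ e ∈ E.filter (fun e => i ∈ e), ∏ v ∈ e.erase i, x v) * x i) := by
          rw [h]; ring
      _ = (1 - α) * (∑ e ∈ E.filter (fun e => i ∈ e), ∏ v ∈ e, x v) := by
          rw [Finset.sum_mul]
          congr 1
          refine Finset.sum_congr rfl (fun e he => ?_)
          rw [Finset.prod_erase_mul _ _ (Finset.mem_filter.mp he).2]
      _ ≤ (1 - α) * ((hdeg E i : ℝ) * xbar ^ k) := by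
          refine mul_le_mul_of_nonneg_left ?_ h1α
          have hbd : ∀ e ∈ E.filter (fun e => i ∈ e), ∏ v ∈ e, x v ≤ xbar ^ k := by
            intro e he
            have hcard := hunif e (Finset.mem_filter.mp he).1
            calc ∏ v ∈ e, x v ≤ ∏ v ∈ e, xbar :=
                  Finset.prod_le_prod (fun v _ => hx v) (fun v _ => hub v)
              _ = xbar ^ k := by rw [Finset.prod_const, hcard]
          calc ∑ e ∈ E.filter (fun e => i ∈ e), ∏ v ∈ e, x v
              ≤ ∑ _e ∈ E.filter (fun e => i ∈ e), xbar ^ k := Finset.sum_le_sum hbd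
            _ = (hdeg E i : ℝ) * xbar ^ k := by
                rw [Finset.sum_const, hdeg, nsmul_eq_mul]
      _ = (1 - α) * (hdeg E i : ℝ) * xbar ^ k := by ring
  -- handshake: sum of degrees = k * m
  have hdsumN : ∑ i : V, hdeg E i = k * E.card := by
    unfold hdeg
    simp_rw [Finset.card_filter]
    rw [Finset.sum_comm]
    have : ∀ e ∈ E, (∑ i : V, if i ∈ e then 1 else 0) = k := by
      intro e he
      rw [Finset.sum_ite_mem, Finset.univ_inter, Finset.sum_const, smul_eq_mul, mul_one]
      exact hunif e he
    rw [Finset.sum_congr rfl this, Finset.sum_const, smul_eq_mul, mul_comm]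
  have hdsum : ∑ i : V, (hdeg E i : ℝ) = (k : ℝ) * E.card := by
    rw [← Nat.cast_sum, hdsumN]; push_cast; ring
  -- sum the pointwise bound
  have hsum1 : ∑ i : V, (ρ - α * (hdeg E i : ℝ)) * x i ^ k ≤
      (1 - α) * ((k : ℝ) * E.card) * xbar ^ k := by
    calc ∑ i : V, (ρ - α * (hdeg E i : ℝ)) * x i ^ k
        ≤ ∑ i : V, (1 - α) * (hdeg E i : ℝ) * xbar ^ k :=
          Finset.sum_le_sum (fun i _ => key i)
      _ = (1 - α) * ((k : ℝ) * E.card) * xbar ^ k := by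
          rw [← Finset.sum_mul, ← Finset.mul_sum, hdsum]
  -- lower bound the LHS
  have hsum2 : ρ * S - α * Δ * S ≤ ∑ i : V, (ρ - α * (hdeg E i : ℝ)) * x i ^ k := by
    have : ∑ i : V, (ρ - α * (hdeg E i : ℝ)) * x i ^ k
        = ρ * S - ∑ i : V, α * (hdeg E i : ℝ) * x i ^ k := by
      rw [hS, Finset.mul_sum, ← Finset.sum_sub_distrib]
      exact Finset.sum_congr rfl (fun i _ => by ring)
    rw [this]
    have hle : ∑ i : V, α * (hdeg E i : ℝ) * x i ^ k ≤ α * Δ * S := by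
      rw [hS, Finset.mul_sum]
      refine Finset.sum_le_sum (fun i _ => ?_)
      have hxk : (0:ℝ) ≤ x i ^ k := pow_nonneg (hx i) k
      exact mul_le_mul_of_nonneg_right
        (mul_le_mul_of_nonneg_left (hΔub i) hα0) hxk
    linarith
  have hfin : (ρ - α * Δ) * S ≤ (1 - α) * (k : ℝ) * E.card * xbar ^ k := by nlinarith
  rw [← sub_le_iff_le_add', le_div_iff₀ hsum]
  linarith [hfin]
end

section
/- Let G be a k-uniform hypergraph with maximum degree Δ, 0 ≤ α < 1, and let x be a k-unit nonnegative vector (Σ_i x_i^k = 1) with maximum entry x̄, satisfying the eigenequation (ρ - α d_i)x_i^{k-1} = (1-α) Σ_{e ∋ i} Π_{v∈e\{i}} x_v for all vertices i and some real ρ ≥ αΔ. Then ρ ≤ αΔ + (1-α)(Σ_i d_i^{k/(k-1)})^{(k-1)/k} x̄^{k-1}. -/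
/-- for a k-unit nonnegative vector x with maximum entry x̄ satisfying the
α-eigenequation with ρ ≥ αΔ (Δ the maximum degree),
ρ ≤ αΔ + (1-α)(Σ_i d_i^{k/(k-1)})^{(k-1)/k} x̄^{k-1}. -/
theorem stmt7 {V : Type*} [Fintype V] [DecidableEq V] (k : ℕ) (hk : 2 ≤ k)
    (E : Finset (Finset V)) (hunif : ∀ e ∈ E, e.card = k)
    (α : ℝ) (hα0 : 0 ≤ α) (hα1 : α < 1)
    (x : V → ℝ) (hx : ∀ v, 0 ≤ x v) (hunit : ∑ v : V, x v ^ k = 1)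
    (xbar : ℝ) (hub : ∀ v, x v ≤ xbar) (hmax : ∃ v, x v = xbar)
    (ρ Δ : ℝ) (hΔub : ∀ v, (hdeg E v : ℝ) ≤ Δ) (hΔmax : ∃ v, (hdeg E v : ℝ) = Δ)
    (hρ : α * Δ ≤ ρ)
    (heig : ∀ i : V, (ρ - α * hdeg E i) * x i ^ (k - 1) =
      (1 - α) * ∑ e ∈ E.filter (fun e => i ∈ e), ∏ v ∈ e.erase i, x v) :
    ρ ≤ α * Δ + (1 - α) *
        (∑ i : V, (hdeg E i : ℝ) ^ ((k : ℝ) / ((k : ℝ) - 1))) ^ (((k : ℝ) - 1) / (k : ℝ)) *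
        xbar ^ (k - 1) := by
  set p : ℝ := (k : ℝ) / ((k : ℝ) - 1) with hp
  have hk2 : (2 : ℝ) ≤ (k : ℝ) := by exact_mod_cast hk
  have hkm1 : (0 : ℝ) < (k : ℝ) - 1 := by linarith
  have hkpos : (0 : ℝ) < (k : ℝ) := by linarith
  have hppos : 0 < p := div_pos hkpos hkm1
  obtain ⟨v₀, hv₀⟩ := hmax
  have hxbar : 0 ≤ xbar := hv₀ ▸ hx v₀
  have h1α : (0 : ℝ) < 1 - α := by linarith
  set c : ℝ := ρ - α * Δ with hc
  have hc0 : 0 ≤ c := by simp [hc]; linarith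
  set A : ℝ := (1 - α) * xbar ^ (k - 1) with hA
  have hA0 : 0 ≤ A := mul_nonneg h1α.le (pow_nonneg hxbar _)
  have key : ∀ i : V, c * x i ^ (k - 1) ≤ A * (hdeg E i : ℝ) := by
    intro i
    have h1 : c * x i ^ (k - 1) ≤ (ρ - α * hdeg E i) * x i ^ (k - 1) := by
      apply mul_le_mul_of_nonneg_right _ (pow_nonneg (hx i) _)
      have := hΔub i
      have : α * (hdeg E i : ℝ) ≤ α * Δ := mul_le_mul_of_nonneg_left this hα0
      simp [hc]; linarith
    have hsum : ∑ e ∈ E.filter (fun e => i ∈ e), ∏ v ∈ e.erase i, x v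
        ≤ (hdeg E i : ℝ) * xbar ^ (k - 1) := by
      have : ∀ e ∈ E.filter (fun e => i ∈ e), ∏ v ∈ e.erase i, x v ≤ xbar ^ (k - 1) := by
        intro e he
        rw [Finset.mem_filter] at he
        have hcard : (e.erase i).card = k - 1 := by
          rw [Finset.card_erase_of_mem he.2, hunif e he.1]
        calc ∏ v ∈ e.erase i, x v ≤ ∏ v ∈ e.erase i, xbar :=
              Finset.prod_le_prod (fun v _ => hx v) (fun v _ => hub v)
          _ = xbar ^ (k - 1) := by rw [Finset.prod_const, hcard]
      calc ∑ e ∈ E.filter (fun e => i ∈ e), ∏ v ∈ e.erase i, x v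
          ≤ ∑ _e ∈ E.filter (fun e => i ∈ e), xbar ^ (k - 1) := Finset.sum_le_sum this
        _ = (hdeg E i : ℝ) * xbar ^ (k - 1) := by
            rw [Finset.sum_const, nsmul_eq_mul, hdeg]
    calc c * x i ^ (k - 1) ≤ (ρ - α * hdeg E i) * x i ^ (k - 1) := h1
      _ = (1 - α) * ∑ e ∈ E.filter (fun e => i ∈ e), ∏ v ∈ e.erase i, x v := heig i
      _ ≤ (1 - α) * ((hdeg E i : ℝ) * xbar ^ (k - 1)) :=
          mul_le_mul_of_nonneg_left hsum h1α.le
      _ = A * (hdeg E i : ℝ) := by ring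
  -- raise to power p
  have hxkp : ∀ i : V, (x i ^ (k - 1) : ℝ) ^ p = x i ^ k := by
    intro i
    rw [← Real.rpow_natCast (x i) (k - 1), ← Real.rpow_mul (hx i)]
    have : ((k - 1 : ℕ) : ℝ) * p = (k : ℝ) := by
      have : ((k - 1 : ℕ) : ℝ) = (k : ℝ) - 1 := by
        have : 1 ≤ k := by omega
        push_cast [Nat.cast_sub this]; ring
      rw [this, hp]; field_simp
    rw [this, Real.rpow_natCast]
  have key2 : ∀ i : V, c ^ p * x i ^ k ≤ A ^ p * (hdeg E i : ℝ) ^ p := by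
    intro i
    have h := Real.rpow_le_rpow (mul_nonneg hc0 (pow_nonneg (hx i) _)) (key i) hppos.le
    rwa [Real.mul_rpow hc0 (pow_nonneg (hx i) _), Real.mul_rpow hA0 (Nat.cast_nonneg _),
      hxkp i] at h
  set S : ℝ := ∑ i : V, (hdeg E i : ℝ) ^ p with hS
  have hS0 : 0 ≤ S := Finset.sum_nonneg fun i _ => Real.rpow_nonneg (Nat.cast_nonneg _) _
  have hcsum : c ^ p ≤ A ^ p * S := by
    calc c ^ p = c ^ p * ∑ v : V, x v ^ k := by rw [hunit, mul_one]
      _ = ∑ i : V, c ^ p * x i ^ k := by rw [Finset.mul_sum]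
      _ ≤ ∑ i : V, A ^ p * (hdeg E i : ℝ) ^ p := Finset.sum_le_sum fun i _ => key2 i
      _ = A ^ p * S := by rw [hS, Finset.mul_sum]
  have hfinal : c ≤ A * S ^ (((k : ℝ) - 1) / (k : ℝ)) := by
    have h := Real.rpow_le_rpow (Real.rpow_nonneg hc0 p) hcsum
      (le_of_lt (div_pos hkm1 hkpos))
    have hpinv : p * (((k : ℝ) - 1) / (k : ℝ)) = 1 := by
      rw [hp]; field_simp
    rw [← Real.rpow_mul hc0, hpinv, Real.rpow_one,
      Real.mul_rpow (Real.rpow_nonneg hA0 p) hS0, ← Real.rpow_mul hA0, hpinv,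
      Real.rpow_one] at h
    exact h
  have : ρ = α * Δ + c := by rw [hc]; ring
  rw [this]
  have : A * S ^ (((k : ℝ) - 1) / (k : ℝ))
      = (1 - α) * S ^ (((k : ℝ) - 1) / (k : ℝ)) * xbar ^ (k - 1) := by rw [hA]; ring
  linarith [hfinal, this.symm.le]
end

section
/- Let G be a k-uniform hypergraph, 0 ≤ α < 1, and let x be a positive vector satisfying the eigenequation ρ x_v^{k-1} = α d_v x_v^{k-1} + (1-α) Σ_{e ∋ v} Π_{w∈e\{v}} x_w for every vertex v, for some real ρ. Suppose G' is obtained from G by deleting edges e_1,...,e_r (with u ∉ e_i, v_i ∈ e_i) and adding e_i' = (e_i \ {v_i}) ∪ {u} (assumed not already edges of G, and all distinct). If x_u ≥ x_{v_i} for all i, then x^T(𝒜_α(G')x) ≥ x^T(𝒜_α(G)x), where x^T(𝒜_α(H)x) = α Σ_w d_H(w) x_w^k + (1-α) k Σ_{e∈E(H)} Π_{w∈e} x_w. -/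
/-- The quadratic form x^T(𝒜_α(G)x) of a k-uniform hypergraph with edge set E. -/
def qform {V : Type*} [Fintype V] [DecidableEq V] (k : ℕ) (α : ℝ)
    (E : Finset (Finset V)) (x : V → ℝ) : ℝ :=
  α * ∑ w : V, (hdeg E w : ℝ) * x w ^ k + (1 - α) * k * ∑ e ∈ E, ∏ z ∈ e, x z


lemma sum_moved {V : Type*} [DecidableEq V]
    (E : Finset (Finset V)) (r : ℕ) (e e' : Fin r → Finset V)
    (he : ∀ i, e i ∈ E) (heinj : Function.Injective e)
    (hnew : ∀ i, e' i ∉ E) (he'inj : Function.Injective e')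
    (F : Finset V → ℝ) :
    ∑ f ∈ (E \ Finset.image e Finset.univ) ∪ Finset.image e' Finset.univ, F f
      = ∑ f ∈ E, F f - ∑ i, F (e i) + ∑ i, F (e' i) := by
  have hdisj : Disjoint (E \ Finset.image e Finset.univ) (Finset.image e' Finset.univ) := by
    rw [Finset.disjoint_right]
    intro a ha
    simp only [Finset.mem_image] at ha
    obtain ⟨i, _, rfl⟩ := ha
    simp [hnew i]
  have hsub : Finset.image e Finset.univ ⊆ E := by
    intro a ha; simp only [Finset.mem_image] at ha
    obtain ⟨i, _, rfl⟩ := ha; exact he i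
  rw [Finset.sum_union hdisj, Finset.sum_sdiff_eq_sub hsub,
    Finset.sum_image (fun a _ b _ h => heinj h),
    Finset.sum_image (fun a _ b _ h => he'inj h)]

lemma hdeg_sum {V : Type*} [Fintype V] [DecidableEq V]
    (E : Finset (Finset V)) (g : V → ℝ) :
    ∑ w : V, (hdeg E w : ℝ) * g w = ∑ f ∈ E, ∑ w ∈ f, g w := by
  calc ∑ w : V, (hdeg E w : ℝ) * g w
      = ∑ w : V, ∑ f ∈ E, if w ∈ f then g w else 0 := by
        refine Finset.sum_congr rfl fun w _ => ?_
        rw [← Finset.sum_filter, Finset.sum_const, nsmul_eq_mul, hdeg]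
    _ = ∑ f ∈ E, ∑ w : V, if w ∈ f then g w else 0 := Finset.sum_comm
    _ = ∑ f ∈ E, ∑ w ∈ f, g w := by
        refine Finset.sum_congr rfl fun f _ => ?_
        simp [Finset.sum_ite_mem]

/-- moving edges e₁,…,e_r from v₁,…,v_r to u (with x positive
satisfying the α-eigenequation of G and x_u ≥ x_{v_i}) does not decrease the
quadratic form x^T(𝒜_α(·)x). -/
theorem stmt11 {V : Type*} [Fintype V] [DecidableEq V] (k : ℕ) (hk : 2 ≤ k)
    (α : ℝ) (hα0 : 0 ≤ α) (hα1 : α < 1)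
    (E : Finset (Finset V)) (hunif : ∀ e ∈ E, e.card = k)
    (r : ℕ) (hr : 1 ≤ r) (u : V) (e : Fin r → Finset V) (v : Fin r → V)
    (he : ∀ i, e i ∈ E) (heinj : Function.Injective e)
    (hu : ∀ i, u ∉ e i) (hv : ∀ i, v i ∈ e i)
    (e' : Fin r → Finset V) (he' : ∀ i, e' i = insert u ((e i).erase (v i)))
    (hnew : ∀ i, e' i ∉ E) (he'inj : Function.Injective e')
    (E' : Finset (Finset V))
    (hE' : E' = (E \ Finset.image e Finset.univ) ∪ Finset.image e' Finset.univ)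
    (x : V → ℝ) (hx : ∀ w, 0 < x w) (ρ : ℝ)
    (heig : ∀ w, ρ * x w ^ (k - 1) = α * hdeg E w * x w ^ (k - 1) +
      (1 - α) * ∑ f ∈ E.filter (fun f => w ∈ f), ∏ z ∈ f.erase w, x z)
    (hge : ∀ i, x (v i) ≤ x u) :
    qform k α E x ≤ qform k α E' x := by
  subst hE'
  have key := sum_moved E r e e' he heinj hnew he'inj
  have hprod : ∀ i, ∏ z ∈ e' i, x z = x u * ∏ z ∈ (e i).erase (v i), x z := by
    intro i
    rw [he' i, Finset.prod_insert (by simp [hu i])]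
  have hprod2 : ∀ i, ∏ z ∈ e i, x z = x (v i) * ∏ z ∈ (e i).erase (v i), x z :=
    fun i => (Finset.mul_prod_erase _ _ (hv i)).symm
  have hsum' : ∀ i, ∑ w ∈ e' i, x w ^ k = x u ^ k + ∑ w ∈ (e i).erase (v i), x w ^ k := by
    intro i
    rw [he' i, Finset.sum_insert (by simp [hu i])]
  have hsum2 : ∀ i, ∑ w ∈ e i, x w ^ k = x (v i) ^ k + ∑ w ∈ (e i).erase (v i), x w ^ k :=
    fun i => (Finset.add_sum_erase _ _ (hv i)).symm
  have hc : (0:ℝ) ≤ (1 - α) * k := mul_nonneg (by linarith) (Nat.cast_nonneg k)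
  have ha : ∑ i, ∑ w ∈ e i, x w ^ k ≤ ∑ i, ∑ w ∈ e' i, x w ^ k := by
    refine Finset.sum_le_sum fun i _ => ?_
    rw [hsum' i, hsum2 i]
    have := pow_le_pow_left₀ (hx (v i)).le (hge i) k
    linarith
  have hb : ∑ i, ∏ z ∈ e i, x z ≤ ∑ i, ∏ z ∈ e' i, x z := by
    refine Finset.sum_le_sum fun i _ => ?_
    rw [hprod i, hprod2 i]
    have hp : 0 ≤ ∏ z ∈ (e i).erase (v i), x z := Finset.prod_nonneg fun z _ => (hx z).le
    nlinarith [hge i]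
  unfold qform
  rw [hdeg_sum, hdeg_sum, key (fun f => ∑ w ∈ f, x w ^ k), key (fun f => ∏ z ∈ f, x z)]
  nlinarith [mul_le_mul_of_nonneg_left ha hα0, mul_le_mul_of_nonneg_left hb hc]
end

section
/- Let G be a k-uniform hypergraph with disjoint edges e, f, let U ⊂ e and V ⊂ f with 1 ≤ |U| = |V| ≤ k-1, and set e' = U ∪ (f \ V), f' = V ∪ (e \ U), assumed not edges of G. Let G' = G - {e,f} + {e',f'}. Then for any nonnegative vector x and 0 ≤ α ≤ 1, x^T(𝒜_α(G')x) - x^T(𝒜_α(G)x) = (1-α) k (x_U - x_V)(x_{f\V} - x_{e\U}), where x_S = Π_{w∈S} x_w. In particular if x_U ≥ x_V and x_{e\U} ≤ x_{f\V} then x^T(𝒜_α(G')x) ≥ x^T(𝒜_α(G)x). -/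
/-- for the edge-switching operation replacing disjoint edges e, f by
e' = U ∪ (f \ W), f' = W ∪ (e \ U), and any nonnegative x,
x^T(𝒜_α(G')x) - x^T(𝒜_α(G)x) = (1-α)k(x_U - x_W)(x_{f\W} - x_{e\U});
in particular the quadratic form does not decrease when x_U ≥ x_W and x_{e\U} ≤ x_{f\W}. -/
theorem stmt12 {V : Type*} [Fintype V] [DecidableEq V] (k : ℕ) (hk : 2 ≤ k)
    (α : ℝ) (hα0 : 0 ≤ α) (hα1 : α ≤ 1)
    (E : Finset (Finset V)) (hunif : ∀ g ∈ E, g.card = k)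
    (e f : Finset V) (he : e ∈ E) (hf : f ∈ E) (hdisj : Disjoint e f)
    (U W : Finset V) (hU : U ⊆ e) (hW : W ⊆ f)
    (hcard : U.card = W.card) (h1 : 1 ≤ U.card) (h2 : U.card ≤ k - 1)
    (e' f' : Finset V) (he' : e' = U ∪ (f \ W)) (hf' : f' = W ∪ (e \ U))
    (hne : e' ∉ E) (hnf : f' ∉ E)
    (E' : Finset (Finset V)) (hE' : E' = (E \ {e, f}) ∪ {e', f'})
    (x : V → ℝ) (hx : ∀ w, 0 ≤ x w) :
    qform k α E' x - qform k α E x =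
        (1 - α) * k * ((∏ z ∈ U, x z) - ∏ z ∈ W, x z) *
          ((∏ z ∈ f \ W, x z) - ∏ z ∈ e \ U, x z) ∧
      ((∏ z ∈ W, x z) ≤ (∏ z ∈ U, x z) →
        (∏ z ∈ e \ U, x z) ≤ (∏ z ∈ f \ W, x z) →
        qform k α E x ≤ qform k α E' x) := by

  have hke : e.card = k := hunif e he
  have hef : e ≠ f := by
    intro h
    have he0 : e = ∅ := by
      have : Disjoint e e := h ▸ hdisj
      simpa using this
    rw [he0] at hke; simp at hke; omega
  have hUW : Disjoint U W := hdisj.mono hU hW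
  have hUfW : Disjoint U (f \ W) := hdisj.mono hU Finset.sdiff_subset
  have hWeU : Disjoint W (e \ U) := hdisj.symm.mono hW Finset.sdiff_subset
  have hUne : U.Nonempty := Finset.card_pos.mp h1
  have he'f' : e' ≠ f' := by
    intro h
    obtain ⟨u, hu⟩ := hUne
    have hue' : u ∈ e' := by rw [he']; exact Finset.mem_union_left _ hu
    rw [h, hf'] at hue'
    rcases Finset.mem_union.mp hue' with h' | h'
    · exact (Finset.disjoint_left.mp hUW hu) h'
    · exact (Finset.mem_sdiff.mp h').2 hu
  have hefE : ({e, f} : Finset (Finset V)) ⊆ E := by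
    intro g hg
    rcases Finset.mem_insert.mp hg with h | h
    · exact h ▸ he
    · exact (Finset.mem_singleton.mp h) ▸ hf
  have hdisjE : Disjoint (E \ {e, f}) ({e', f'} : Finset (Finset V)) := by
    rw [Finset.disjoint_right]
    intro g hg hg'
    have hgE : g ∈ E := (Finset.mem_sdiff.mp hg').1
    rcases Finset.mem_insert.mp hg with h | h
    · exact hne (h ▸ hgE)
    · exact hnf ((Finset.mem_singleton.mp h) ▸ hgE)
  have hdeg_eq : ∀ w, hdeg E' w = hdeg E w := by
    intro w
    unfold hdeg
    rw [hE', Finset.filter_union,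
      Finset.card_union_of_disjoint (Finset.disjoint_filter_filter hdisjE)]
    have hEsplit : E = (E \ {e, f}) ∪ {e, f} := (Finset.sdiff_union_of_subset hefE).symm
    conv_rhs => rw [hEsplit]
    rw [Finset.filter_union,
      Finset.card_union_of_disjoint (Finset.disjoint_filter_filter Finset.sdiff_disjoint)]
    congr 1
    rw [Finset.card_filter, Finset.card_filter, Finset.sum_pair he'f', Finset.sum_pair hef]
    subst he' hf'
    have hUe : w ∈ U → w ∈ e := fun h => hU h
    have hWf : w ∈ W → w ∈ f := fun h => hW h
    have hD : w ∈ e → w ∉ f := fun h => Finset.disjoint_left.mp hdisj h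
    clear hEsplit hE' hdisjE hne hnf he'f'
    by_cases hwe : w ∈ e <;> by_cases hwf : w ∈ f <;>
      by_cases hwU : w ∈ U <;> by_cases hwW : w ∈ W <;>
      simp only [Finset.mem_union, Finset.mem_sdiff, hwe, hwf, hwU, hwW,
        true_or, or_true, false_or, or_false, true_and, and_true, false_and, and_false,
        not_true, not_false_iff, if_true, if_false, ite_true, ite_false] <;>
      first
        | rfl
        | exact absurd hwf (hD hwe)
        | exact absurd (hUe hwU) hwe
        | exact absurd (hWf hwW) hwf
        | tauto
  have hsum : (∑ g ∈ E', ∏ z ∈ g, x z) =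
      (∑ g ∈ E, ∏ z ∈ g, x z) - (∏ z ∈ e, x z) - (∏ z ∈ f, x z)
        + (∏ z ∈ e', x z) + (∏ z ∈ f', x z) := by
    rw [hE', Finset.sum_union hdisjE, Finset.sum_pair he'f']
    have hs := Finset.sum_sdiff (f := fun g => ∏ z ∈ g, x z) hefE
    rw [Finset.sum_pair hef] at hs
    linarith
  have hpe : (∏ z ∈ e, x z) = (∏ z ∈ U, x z) * (∏ z ∈ e \ U, x z) := by
    rw [← Finset.prod_sdiff hU]; ring
  have hpf : (∏ z ∈ f, x z) = (∏ z ∈ W, x z) * (∏ z ∈ f \ W, x z) := by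
    rw [← Finset.prod_sdiff hW]; ring
  have hpe' : (∏ z ∈ e', x z) = (∏ z ∈ U, x z) * (∏ z ∈ f \ W, x z) := by
    rw [he', Finset.prod_union hUfW]
  have hpf' : (∏ z ∈ f', x z) = (∏ z ∈ W, x z) * (∏ z ∈ e \ U, x z) := by
    rw [hf', Finset.prod_union hWeU]
  have key : qform k α E' x - qform k α E x =
      (1 - α) * k * ((∏ z ∈ U, x z) - ∏ z ∈ W, x z) *
        ((∏ z ∈ f \ W, x z) - ∏ z ∈ e \ U, x z) := by
    unfold qform
    have hsd : (∑ w : V, (hdeg E' w : ℝ) * x w ^ k) =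
        ∑ w : V, (hdeg E w : ℝ) * x w ^ k :=
      Finset.sum_congr rfl fun w _ => by rw [hdeg_eq]
    rw [hsd, hsum, hpe, hpf, hpe', hpf']; ring
  refine ⟨key, fun hge hle => ?_⟩
  have hnn : 0 ≤ qform k α E' x - qform k α E x := by
    rw [key]
    have hα : (0:ℝ) ≤ 1 - α := by linarith
    apply mul_nonneg
    apply mul_nonneg
    · positivity
    · linarith
    · linarith
  linarith
end
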